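/- Let G be a graph, D ⊆ V(G) a cluster vertex deletion set of G, k an integer, and let v, v' be two vertices lying in the same connected component of G − D with N(v) ∩ D = N(v') ∩ D. If S is a (D,k)-feasible vi-set of G with v ∈ S and v' ∉ S, then (S ∖ {v}) ∪ {v'} is also a (D,k)-feasible vi-set of G. -/
import Mathlib


namespace VI

open SimpleGraph

variable {V : Type*}

/-- Total weight of a set of vertices. -/
noncomputable def setWeight (w : V → ℕ) (X : Set V) : ℕ := ∑ᶠ v ∈ X, w v

/-- Maximum weight of a connected component of `G − S`. -/
noncomputable def compMax (G : SimpleGraph V) (w : V → ℕ) (S : Set V) : ℕ :=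
  sSup {n | ∃ C : (G.induce Sᶜ).ConnectedComponent, n = setWeight w (Subtype.val '' C.supp)}

/-- `w(S) + max_{C ∈ cc(G−S)} w(V(C))`. -/
noncomputable def viCost (G : SimpleGraph V) (w : V → ℕ) (S : Set V) : ℕ :=
  setWeight w S + compMax G w S

/-- The weighted vertex integrity of `G`. -/
noncomputable def wvi (G : SimpleGraph V) (w : V → ℕ) : ℕ := ⨅ S : Set V, viCost G w S

/-- Maximum number of vertices of a connected component of `G − S`. -/
noncomputable def uCompMax (G : SimpleGraph V) (S : Set V) : ℕ :=
  sSup {n | ∃ C : (G.induce Sᶜ).ConnectedComponent, n = C.supp.ncard}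

/-- `|S| + max_{C ∈ cc(G−S)} |V(C)|`. -/
noncomputable def uViCost (G : SimpleGraph V) (S : Set V) : ℕ := S.ncard + uCompMax G S

/-- The (unweighted) vertex integrity of `G`. -/
noncomputable def uvi (G : SimpleGraph V) : ℕ := ⨅ S : Set V, uViCost G S

/-- A vertex `v` is redundant w.r.t. `S` if at most one connected component of `G − S`
contains a neighbor of `v`. -/
def Redundant (G : SimpleGraph V) (S : Set V) (v : V) : Prop :=
  {C : (G.induce Sᶜ).ConnectedComponent | ∃ u : (Sᶜ : Set V), G.Adj v ↑u ∧ u ∈ C.supp}.Subsingleton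

/-- `S` is irredundant if it contains no redundant vertex. -/
def Irredundant (G : SimpleGraph V) (S : Set V) : Prop := ∀ v ∈ S, ¬ Redundant G S v

end VI

namespace VI

/-- `D` is a cluster vertex deletion set of `G` if every connected component of `G − D`
is a complete graph. -/
def IsCVDSet {V : Type*} (G : SimpleGraph V) (D : Set V) : Prop :=
  ∀ C : (G.induce Dᶜ).ConnectedComponent, (G.induce Dᶜ).IsClique C.supp

/-- `S` is `(D,k)`-feasible if `S ∩ D = ∅` and `|S| ≤ k`. -/
def DkFeasible {V : Type*} (D : Set V) (k : ℕ) (S : Set V) : Prop :=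
  S ∩ D = ∅ ∧ S.ncard ≤ k

/-- A `(D,k)`-feasible vi-set: a `(D,k)`-feasible set minimizing
`|S| + max_{C ∈ cc(G−S)} |V(C)|` among all `(D,k)`-feasible sets. -/
def IsDkFeasibleViSet {V : Type*} (G : SimpleGraph V) (D : Set V) (k : ℕ) (S : Set V) :
    Prop :=
  DkFeasible D k S ∧ ∀ S' : Set V, DkFeasible D k S' → uViCost G S ≤ uViCost G S'

end VI


open SimpleGraph in
lemma VI.sSup_ncard_eq {V W : Type*} {A : SimpleGraph V} {B : SimpleGraph W} (φ : A ≃g B) :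
    sSup {n | ∃ C : A.ConnectedComponent, n = C.supp.ncard}
      = sSup {n | ∃ C : B.ConnectedComponent, n = C.supp.ncard} := by
  congr 1
  ext n
  constructor
  · rintro ⟨C, rfl⟩
    exact ⟨φ.connectedComponentEquiv C, by
      rw [Set.ncard, Set.ncard, Set.encard_congr (SimpleGraph.ConnectedComponent.isoEquivSupp φ C)]⟩
  · rintro ⟨C, rfl⟩
    exact ⟨φ.symm.connectedComponentEquiv C, by
      rw [Set.ncard, Set.ncard, Set.encard_congr (SimpleGraph.ConnectedComponent.isoEquivSupp φ.symm C)]⟩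

open VI SimpleGraph in
/-- Swapping a vertex of a `(D,k)`-feasible vi-set with a vertex of the same component
of `G − D` having the same neighborhood in `D` yields another `(D,k)`-feasible vi-set. -/
theorem statement15 {V : Type*} [Fintype V] (G : SimpleGraph V) (D : Set V)
    (hD : IsCVDSet G D) (k : ℕ) (v v' : V) (hv : v ∉ D) (hv' : v' ∉ D)
    (hreach : (G.induce Dᶜ).Reachable ⟨v, hv⟩ ⟨v', hv'⟩)
    (hN : G.neighborSet v ∩ D = G.neighborSet v' ∩ D)
    (S : Set V) (hS : IsDkFeasibleViSet G D k S) (hvS : v ∈ S) (hv'S : v' ∉ S) :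
    IsDkFeasibleViSet G D k ((S \ {v}) ∪ {v'}) := by
  classical
  obtain ⟨⟨hSD, hSk⟩, hmin⟩ := hS
  have hvv' : v ≠ v' := fun h => hv'S (h ▸ hvS)
  -- adjacency transfer between v and v'
  have hadj : ∀ u, u ≠ v → u ≠ v' → (G.Adj v u ↔ G.Adj v' u) := by
    intro u huv huv'
    by_cases hu : u ∈ D
    · have h1 : u ∈ G.neighborSet v ∩ D ↔ u ∈ G.neighborSet v' ∩ D := by rw [hN]
      simp only [Set.mem_inter_iff, mem_neighborSet, hu, and_true] at h1
      exact h1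
    · constructor
      · intro h
        have hind : (G.induce Dᶜ).Adj ⟨v, hv⟩ ⟨u, hu⟩ := h
        have hr : (G.induce Dᶜ).Reachable ⟨v', hv'⟩ ⟨u, hu⟩ :=
          hreach.symm.trans hind.reachable
        have hv'mem : (⟨v', hv'⟩ : ↥Dᶜ) ∈
            ((G.induce Dᶜ).connectedComponentMk ⟨u, hu⟩).supp :=
          ConnectedComponent.sound hr
        have humem : (⟨u, hu⟩ : ↥Dᶜ) ∈
            ((G.induce Dᶜ).connectedComponentMk ⟨u, hu⟩).supp := rfl
        have hne : (⟨v', hv'⟩ : ↥Dᶜ) ≠ ⟨u, hu⟩ := by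
          simp [Subtype.ext_iff]; exact fun h' => huv' h'.symm
        exact hD _ hv'mem humem hne
      · intro h
        have hind : (G.induce Dᶜ).Adj ⟨v', hv'⟩ ⟨u, hu⟩ := h
        have hr : (G.induce Dᶜ).Reachable ⟨v, hv⟩ ⟨u, hu⟩ :=
          hreach.trans hind.reachable
        have hvmem : (⟨v, hv⟩ : ↥Dᶜ) ∈
            ((G.induce Dᶜ).connectedComponentMk ⟨u, hu⟩).supp :=
          ConnectedComponent.sound hr
        have humem : (⟨u, hu⟩ : ↥Dᶜ) ∈
            ((G.induce Dᶜ).connectedComponentMk ⟨u, hu⟩).supp := rfl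
        have hne : (⟨v, hv⟩ : ↥Dᶜ) ≠ ⟨u, hu⟩ := by
          simp [Subtype.ext_iff]; exact fun h' => huv h'.symm
        exact hD _ hvmem humem hne
  -- the swap is a graph automorphism
  have h1 : ∀ a b, G.Adj a b → G.Adj (Equiv.swap v v' a) (Equiv.swap v v' b) := by
    intro a b hab
    rcases eq_or_ne v a with rfl | hva
    · rcases eq_or_ne v' b with rfl | hv'b
      · simpa using hab.symm
      · have hbv : b ≠ v := hab.ne'
        rw [Equiv.swap_apply_left, Equiv.swap_apply_of_ne_of_ne hbv (Ne.symm hv'b)]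
        exact (hadj b hbv (Ne.symm hv'b)).mp hab
    · rcases eq_or_ne v' a with rfl | hv'a
      · rcases eq_or_ne v b with rfl | hvb
        · simpa using hab.symm
        · have hbv' : b ≠ v' := hab.ne'
          rw [Equiv.swap_apply_right, Equiv.swap_apply_of_ne_of_ne (Ne.symm hvb) hbv']
          exact (hadj b (Ne.symm hvb) hbv').mpr hab
      · rcases eq_or_ne v b with rfl | hvb
        · rw [Equiv.swap_apply_left,
            Equiv.swap_apply_of_ne_of_ne (Ne.symm hva) (Ne.symm hv'a)]
          exact ((hadj a (Ne.symm hva) (Ne.symm hv'a)).mp hab.symm).symm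
        · rcases eq_or_ne v' b with rfl | hv'b
          · rw [Equiv.swap_apply_right,
              Equiv.swap_apply_of_ne_of_ne (Ne.symm hva) (Ne.symm hv'a)]
            exact ((hadj a (Ne.symm hva) (Ne.symm hv'a)).mpr hab.symm).symm
          · rw [Equiv.swap_apply_of_ne_of_ne (Ne.symm hva) (Ne.symm hv'a),
              Equiv.swap_apply_of_ne_of_ne (Ne.symm hvb) (Ne.symm hv'b)]
            exact hab
  have hσσ : ∀ a b : V, G.Adj (Equiv.swap v v' a) (Equiv.swap v v' b) ↔ G.Adj a b :=
    fun a b => ⟨fun h => by simpa using h1 _ _ h, h1 a b⟩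
  -- the image of S under the swap
  have himg : Equiv.swap v v' '' S = (S \ {v}) ∪ {v'} := by
    ext u
    simp only [Set.mem_image, Set.mem_union, Set.mem_diff, Set.mem_singleton_iff]
    constructor
    · rintro ⟨x, hx, rfl⟩
      rcases eq_or_ne x v with rfl | hxv
      · right; simp
      · rcases eq_or_ne x v' with rfl | hxv'
        · exact absurd hx hv'S
        · left
          rw [Equiv.swap_apply_of_ne_of_ne hxv hxv']
          exact ⟨hx, hxv⟩
    · rintro (⟨hu, huv⟩ | rfl)
      · rcases eq_or_ne u v' with rfl | huv'
        · exact absurd hu hv'S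
        · exact ⟨u, hu, Equiv.swap_apply_of_ne_of_ne huv huv'⟩
      · exact ⟨v, hvS, Equiv.swap_apply_left _ _⟩
  have hncard : ((S \ {v}) ∪ {v'}).ncard = S.ncard := by
    rw [← himg, Set.ncard_image_of_injective _ (Equiv.injective _)]
  have hfeas : DkFeasible D k ((S \ {v}) ∪ {v'}) := by
    constructor
    · apply Set.eq_empty_iff_forall_notMem.mpr
      rintro u ⟨hu, huD⟩
      rcases hu with h | h
      · exact Set.eq_empty_iff_forall_notMem.mp hSD u ⟨h.1, huD⟩
      · rw [Set.mem_singleton_iff] at h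
        subst h
        exact hv' huD
    · rw [hncard]; exact hSk
  -- graph isomorphism between the two induced graphs
  have hmem : ∀ u : V, u ∈ Sᶜ ↔ Equiv.swap v v' u ∈ ((S \ {v}) ∪ {v'})ᶜ := by
    intro u
    rw [← himg, Set.mem_compl_iff, Set.mem_compl_iff,
      (Equiv.injective (Equiv.swap v v')).mem_set_image]
  let φ : G.induce Sᶜ ≃g G.induce ((S \ {v}) ∪ {v'})ᶜ :=
    { toEquiv := (Equiv.swap v v').subtypeEquiv hmem
      map_rel_iff' := fun {a b} => hσσ ↑a ↑b }
  have hcost : uViCost G ((S \ {v}) ∪ {v'}) = uViCost G S := by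
    unfold uViCost uCompMax
    rw [hncard, VI.sSup_ncard_eq φ]
  exact ⟨hfeas, fun S'' hS'' => hcost ▸ hmin S'' hS''⟩
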